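/- arXiv:2203.08793 — 4 statements merged into one kernel-verified Lean document; each statement's English description precedes it below -/
import Mathlib

section
/- With G = ⟨A, x | x² = y, xax⁻¹ = f(a)⟩ as above and π : A → ℂ* a one-dimensional representation with B ⊄ ker(π), the induced 2-dimensional representation R_π (given by R_π(a) = diag(π(a), π(f(a))), R_π(xa) = [[0, π(yf(a))],[π(a),0]]) is irreducible; equivalently, its character χ satisfies (χ|χ) = (1/|G|) Σ_{g∈G} χ(g) conj(χ(g)) = 1. -/
/-- A nontrivial character of a finite group sums to zero. -/
lemma sum_char_eq_zero {H : Type*} [Group H] [Fintype H] (ψ : H →* ℂˣ)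
    (h : ∃ b, ψ b ≠ 1) : ∑ a : H, (ψ a : ℂ) = 0 := by
  obtain ⟨b, hb⟩ := h
  have h1 : (ψ b : ℂ) * ∑ a : H, (ψ a : ℂ) = ∑ a : H, (ψ a : ℂ) := by
    rw [Finset.mul_sum]
    exact Fintype.sum_bijective (b * ·) (Group.mulLeft_bijective b) _ _
      (fun a => by rw [map_mul, Units.val_mul])
  have hb' : (ψ b : ℂ) ≠ 1 := fun h => hb (Units.ext h)
  by_contra hS
  exact hb' (mul_right_cancel₀ hS (by rw [h1, one_mul]))

/-- The induced 2-dimensional representation `R_π` of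
`G = ⟨A, x | x² = y, xax⁻¹ = f(a)⟩` (where `B ⊄ ker π`) is irreducible:
its character `χ = trace ∘ R_π` satisfies `(χ|χ) = (1/|G|) ∑_g χ(g) conj(χ(g)) = 1`. -/
theorem stmt_3 {G : Type*} [Group G] [Fintype G] (A : Subgroup G)
    (hA : ∀ a b : ↥A, a * b = b * a) (hcard : 3 ≤ Nat.card A) (hidx : A.index = 2)
    (f : ↥A ≃* ↥A) (hf2 : ∀ a : ↥A, f (f a) = a) (hfne : f ≠ MulEquiv.refl ↥A)
    (x : G) (hx : x ∉ A) (y : ↥A) (hy : f y = y) (hx2 : x ^ 2 = (y : G))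
    (hconj : ∀ a : ↥A, x * (a : G) * x⁻¹ = ((f a : ↥A) : G))
    (π : ↥A →* ℂˣ)
    (hB : ¬ (Subgroup.closure {b : ↥A | ∃ a : ↥A, b = f a * a⁻¹} ≤ π.ker))
    (R : G →* Matrix (Fin 2) (Fin 2) ℂ)
    (hR1 : ∀ a : ↥A, R (a : G) = !![(π a : ℂ), 0; 0, (π (f a) : ℂ)])
    (hR2 : ∀ a : ↥A, R (x * (a : G)) = !![0, (π (y * f a) : ℂ); (π a : ℂ), 0]) :
    (1 / (Fintype.card G : ℂ)) *
      ∑ g : G, (R g).trace * (starRingEnd ℂ) ((R g).trace) = 1 := by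
  classical
  set F : G → ℂ := fun g => (R g).trace * (starRingEnd ℂ) ((R g).trace) with hF
  -- conjugate of π a is its inverse
  have hncard : Nat.card ↥A ≠ 0 := by omega
  have hconjπ : ∀ a : ↥A, (starRingEnd ℂ) (π a : ℂ) = ((π a : ℂ))⁻¹ := by
    intro a
    have h1 : (π a : ℂ) ^ Nat.card ↥A = 1 := by
      rw [← Units.val_pow_eq_pow_val, ← map_pow, pow_card_eq_one', map_one, Units.val_one]
    exact (Complex.inv_eq_conj (Complex.norm_eq_one_of_pow_eq_one h1 hncard)).symm
  -- the character ψ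
  set ψ : ↥A →* ℂˣ := (π.comp f.toMonoidHom) * π⁻¹ with hψ
  have hψval : ∀ a : ↥A, (ψ a : ℂ) = (π (f a) : ℂ) * ((π a : ℂ))⁻¹ := by
    intro a
    simp [hψ, MonoidHom.mul_apply, MonoidHom.inv_apply]
  have hψne : ∃ b, ψ b ≠ 1 := by
    by_contra h
    push_neg at h
    apply hB
    rw [Subgroup.closure_le]
    rintro b ⟨a, rfl⟩
    have := h a
    simp only [hψ, MonoidHom.mul_apply, MonoidHom.inv_apply, MonoidHom.comp_apply,
      MulEquiv.coe_toMonoidHom] at this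
    have : π (f a) = π a := by
      exact div_eq_one.mp this
    simp [MonoidHom.mem_ker, map_mul, map_inv, this]
  have hψinv : ∃ b, ψ⁻¹ b ≠ 1 := by
    obtain ⟨b, hb⟩ := hψne
    exact ⟨b, by simpa [MonoidHom.inv_apply] using inv_ne_one.mpr hb⟩
  -- F vanishes off A
  have hF0 : ∀ g : G, g ∉ A → F g = 0 := by
    intro g hg
    have hmem : x⁻¹ * g ∈ A := by
      rw [Subgroup.mul_mem_iff_of_index_two hidx]
      simp only [inv_mem_iff]
      exact iff_of_false hx hg
    have hgeq : g = x * ((⟨x⁻¹ * g, hmem⟩ : ↥A) : G) := by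
      simp [mul_assoc]
    have : (R g).trace = 0 := by
      rw [hgeq, hR2]
      simp [Matrix.trace_fin_two]
    simp [hF, this]
  -- value of F on A
  have hFa : ∀ a : ↥A, F ↑a = 2 + (ψ a : ℂ) + ((ψ a)⁻¹ : ℂˣ) := by
    intro a
    have htr : (R (a : G)).trace = (π a : ℂ) + (π (f a) : ℂ) := by
      rw [hR1]; simp [Matrix.trace_fin_two]
    have hp : (π a : ℂ) ≠ 0 := Units.ne_zero _
    have hq : (π (f a) : ℂ) ≠ 0 := Units.ne_zero _
    have hψi : (((ψ a)⁻¹ : ℂˣ) : ℂ) = (π a : ℂ) * ((π (f a) : ℂ))⁻¹ := by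
      rw [Units.val_inv_eq_inv_val, hψval a, mul_inv, inv_inv]; ring
    rw [hF]
    simp only [htr, map_add, hconjπ, hψval, hψi]
    field_simp
    ring
  -- split the sum
  have hsplit : ∑ g : G, F g = ∑ a : ↥A, F ↑a := by
    rw [← Finset.sum_filter_add_sum_filter_not Finset.univ (· ∈ A) F]
    rw [Finset.sum_subtype (p := (· ∈ A)) _ (by simp) F]
    rw [Finset.sum_eq_zero (fun g hg => hF0 g (by simpa using hg)), add_zero]
  have hsumA : ∑ a : ↥A, F ↑a = 2 * (Nat.card ↥A : ℂ) := by
    have h1 : ∑ a : ↥A, (ψ a : ℂ) = 0 := sum_char_eq_zero ψ hψne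
    have h2 : ∑ a : ↥A, (((ψ a)⁻¹ : ℂˣ) : ℂ) = 0 := by
      have := sum_char_eq_zero ψ⁻¹ hψinv
      simpa [MonoidHom.inv_apply] using this
    calc ∑ a : ↥A, F ↑a = ∑ a : ↥A, (2 + (ψ a : ℂ) + ((ψ a)⁻¹ : ℂˣ)) :=
          Finset.sum_congr rfl (fun a _ => hFa a)
      _ = 2 * (Nat.card ↥A : ℂ) := by
          rw [Finset.sum_add_distrib, Finset.sum_add_distrib, h1, h2, add_zero, add_zero]
          simp [Nat.card_eq_fintype_card, Finset.card_univ, mul_comm]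
  have hcardG : (Fintype.card G : ℂ) = 2 * (Nat.card ↥A : ℂ) := by
    have := Subgroup.card_mul_index A
    rw [hidx] at this
    rw [← Nat.card_eq_fintype_card, ← this]
    push_cast
    ring
  rw [hsplit, hsumA, hcardG]
  have : (Nat.card ↥A : ℂ) ≠ 0 := Nat.cast_ne_zero.mpr hncard
  field_simp
end

section
/- Let A be a finite abelian group, f ∈ Aut(A) of order 2, and for i ∈ {1,2} let π_i : A → ℂ* be one-dimensional representations with B = {f(a)a⁻¹ : a ∈ A} not contained in ker(π_i). If π₁(a) + π₁(f(a)) = π₂(a) + π₂(f(a)) for all a ∈ A, then π₂ = π₁ or π₂ = π₁ ∘ f. -/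
/-- A sum trick: for monoid homs to ℂˣ, if the hom `a ↦ u a * (v a)⁻¹` is nontrivial,
the sum of `u a / v a` over the group vanishes. -/
lemma aux_sum_eq_zero {A : Type*} [CommGroup A] [Fintype A] (g : A →* ℂˣ)
    (hg : g ≠ 1) : ∑ a : A, (g a : ℂ) = 0 := by
  have := sum_hom_units_eq_zero ((Units.coeHom ℂ).comp g) ?_
  · simpa using this
  · intro h
    apply hg
    ext a
    have := DFunLike.congr_fun h a
    simp only [MonoidHom.comp_apply, Units.coeHom_apply, MonoidHom.one_apply] at this
    rw [MonoidHom.one_apply]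
    exact this.trans Units.val_one.symm

/-- If two one-dimensional representations `π₁, π₂` of a finite abelian group `A`
whose kernels do not contain `B = {f(a)a⁻¹ : a ∈ A}` have equal induced characters,
i.e. `π₁(a) + π₁(f(a)) = π₂(a) + π₂(f(a))` for all `a`, then `π₂ = π₁` or `π₂ = π₁ ∘ f`. -/
theorem stmt_4 {A : Type*} [CommGroup A] [Fintype A]
    (f : A ≃* A) (hf2 : ∀ a : A, f (f a) = a) (hfne : f ≠ MulEquiv.refl A)
    (π₁ π₂ : A →* ℂˣ)
    (hB1 : ¬ (Subgroup.closure {b : A | ∃ a : A, b = f a * a⁻¹} ≤ π₁.ker))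
    (hB2 : ¬ (Subgroup.closure {b : A | ∃ a : A, b = f a * a⁻¹} ≤ π₂.ker))
    (hchar : ∀ a : A, (π₁ a : ℂ) + (π₁ (f a) : ℂ) = (π₂ a : ℂ) + (π₂ (f a) : ℂ)) :
    (∀ a : A, π₂ a = π₁ a) ∨ (∀ a : A, π₂ a = π₁ (f a)) := by
  by_contra hcon
  push_neg at hcon
  obtain ⟨⟨a₁, ha₁⟩, ⟨a₂, ha₂⟩⟩ := hcon
  -- π₂ ∘ f ≠ π₂ from hB2
  have hB2' : ∃ a : A, π₂ (f a) ≠ π₂ a := by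
    by_contra h
    push_neg at h
    apply hB2
    rw [Subgroup.closure_le]
    rintro b ⟨a, rfl⟩
    simp [MonoidHom.mem_ker, map_mul, h a, map_inv]
  obtain ⟨a₃, ha₃⟩ := hB2'
  -- the three nontrivial homs
  set g₁ : A →* ℂˣ := π₁ * π₂⁻¹ with hg₁def
  set g₂ : A →* ℂˣ := (π₁.comp f.toMonoidHom) * π₂⁻¹ with hg₂def
  set g₃ : A →* ℂˣ := (π₂.comp f.toMonoidHom) * π₂⁻¹ with hg₃def
  have hs₁ : ∑ a : A, (g₁ a : ℂ) = 0 := by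
    apply aux_sum_eq_zero
    intro h
    apply ha₁
    have := DFunLike.congr_fun h a₁
    simp only [hg₁def, MonoidHom.mul_apply, MonoidHom.inv_apply, MonoidHom.one_apply] at this
    have := mul_inv_eq_one.mp this
    exact this.symm
  have hs₂ : ∑ a : A, (g₂ a : ℂ) = 0 := by
    apply aux_sum_eq_zero
    intro h
    apply ha₂
    have := DFunLike.congr_fun h a₂
    simp only [hg₂def, MonoidHom.mul_apply, MonoidHom.inv_apply, MonoidHom.one_apply,
      MonoidHom.comp_apply, MulEquiv.coe_toMonoidHom] at this
    have := mul_inv_eq_one.mp this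
    exact this.symm
  have hs₃ : ∑ a : A, (g₃ a : ℂ) = 0 := by
    apply aux_sum_eq_zero
    intro h
    apply ha₃
    have := DFunLike.congr_fun h a₃
    simp only [hg₃def, MonoidHom.mul_apply, MonoidHom.inv_apply, MonoidHom.one_apply,
      MonoidHom.comp_apply, MulEquiv.coe_toMonoidHom] at this
    exact mul_inv_eq_one.mp this
  -- multiply hchar by (π₂ a)⁻¹ and sum
  have key : ∀ a : A, (g₁ a : ℂ) + (g₂ a : ℂ) = 1 + (g₃ a : ℂ) := by
    intro a
    have h := hchar a
    have hne : (π₂ a : ℂ) ≠ 0 := Units.ne_zero _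
    have : ((π₁ a : ℂ) + (π₁ (f a) : ℂ)) * ((π₂ a : ℂ))⁻¹ =
        ((π₂ a : ℂ) + (π₂ (f a) : ℂ)) * ((π₂ a : ℂ))⁻¹ := by rw [h]
    simp only [hg₁def, hg₂def, hg₃def, MonoidHom.mul_apply, MonoidHom.inv_apply,
      MonoidHom.comp_apply, MulEquiv.coe_toMonoidHom, Units.val_mul, Units.val_inv_eq_inv_val]
    field_simp at this ⊢
    linear_combination this
  have hsum : (0 : ℂ) = Fintype.card A := by
    calc (0 : ℂ) = ∑ a : A, ((g₁ a : ℂ) + (g₂ a : ℂ)) := by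
          rw [Finset.sum_add_distrib, hs₁, hs₂, add_zero]
      _ = ∑ a : A, (1 + (g₃ a : ℂ)) := by
          exact Finset.sum_congr rfl fun a _ => key a
      _ = (Fintype.card A : ℂ) := by
          rw [Finset.sum_add_distrib, hs₃, add_zero, Finset.sum_const,
            Finset.card_univ, nsmul_eq_mul, mul_one]
  have : (Fintype.card A : ℂ) ≠ 0 := by
    exact_mod_cast Nat.cast_ne_zero.mpr Fintype.card_ne_zero
  exact this hsum.symm
end

section
/- Let π₁, π₂ : A → ℂ* be one-dimensional representations of a finite abelian group A and f ∈ Aut(A) of order 2. Fix a ∈ A. If π₁(a) + π₁(f(a)) = π₂(a) + π₂(f(a)), then π₁(f(a)a⁻¹) = conj(π₂(f(a)a⁻¹)) or π₁(f(a)a⁻¹) = π₂(f(a)a⁻¹). -/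
/-!
Every value of a character of a finite group is a root of unity, hence of modulus one. Writing
`b = f a`, the hypothesis reads `π₁ a * (1 + π₁ (b a⁻¹)) = π₂ a * (1 + π₂ (b a⁻¹))`, so
`‖1 + π₁ (b a⁻¹)‖ = ‖1 + π₂ (b a⁻¹)‖`. For `‖z‖ = 1` one has `‖1 + z‖² = 2 + 2 Re z`, so the two
values share their real part and, having modulus one, their imaginary parts agree up to sign.
-/

open ComplexConjugate

theorem MonoidHom.norm_coe_units_apply_eq_one {G : Type*} [Group G] [Finite G]
    (π : G →* ℂˣ) (x : G) : ‖(π x : ℂ)‖ = 1 := by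
  refine Complex.norm_eq_one_of_pow_eq_one (n := Nat.card G) ?_ Nat.card_pos.ne'
  rw [← Units.val_pow_eq_pow_val, ← map_pow, pow_card_eq_one', map_one, Units.val_one]

theorem Complex.eq_conj_or_eq_of_norm_one_add_eq {z w : ℂ} (hz : ‖z‖ = 1) (hw : ‖w‖ = 1)
    (h : ‖1 + z‖ = ‖1 + w‖) : z = conj w ∨ z = w := by
  have hz_im := Complex.sq_norm_sub_sq_re z
  have hw_im := Complex.sq_norm_sub_sq_re w
  have hz_add := Complex.sq_norm_sub_sq_re (1 + z)
  have hw_add := Complex.sq_norm_sub_sq_re (1 + w)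
  simp only [hz, hw, h, Complex.add_re, Complex.add_im, Complex.one_re, Complex.one_im,
    zero_add] at hz_im hw_im hz_add hw_add
  have hre : z.re = w.re := by linear_combination (hw_add - hz_add - hw_im + hz_im) / 2
  have him : z.im ^ 2 = w.im ^ 2 := by linear_combination hw_im - hz_im - (z.re + w.re) * hre
  rcases sq_eq_sq_iff_eq_or_eq_neg.mp him with him | him
  · exact Or.inr (Complex.ext hre him)
  · exact Or.inl (Complex.ext (by simp [hre]) (by simp [him]))

theorem MonoidHom.coe_units_apply_add_eq_mul {G : Type*} [CommGroup G] (π : G →* ℂˣ)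
    (a b : G) : (π a : ℂ) + π b = π a * (1 + π (b * a⁻¹)) := by
  rw [mul_one_add, ← Units.val_mul, ← map_mul, mul_inv_cancel_comm_assoc]

theorem stmt_5_general {A : Type*} [CommGroup A] [Fintype A]
    (f : A ≃* A)
    (π₁ π₂ : A →* ℂˣ) (a : A)
    (h : (π₁ a : ℂ) + (π₁ (f a) : ℂ) = (π₂ a : ℂ) + (π₂ (f a) : ℂ)) :
    (π₁ (f a * a⁻¹) : ℂ) = (starRingEnd ℂ) (π₂ (f a * a⁻¹) : ℂ) ∨
      (π₁ (f a * a⁻¹) : ℂ) = (π₂ (f a * a⁻¹) : ℂ) := by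
  refine Complex.eq_conj_or_eq_of_norm_one_add_eq (π₁.norm_coe_units_apply_eq_one _)
    (π₂.norm_coe_units_apply_eq_one _) ?_
  have hnorm := congrArg (‖·‖) h
  simpa only [MonoidHom.coe_units_apply_add_eq_mul, norm_mul,
    MonoidHom.norm_coe_units_apply_eq_one, one_mul] using hnorm

/-- If `π₁(a) + π₁(f(a)) = π₂(a) + π₂(f(a))` for a fixed `a`, then
`π₁(f(a)a⁻¹) = conj(π₂(f(a)a⁻¹))` or `π₁(f(a)a⁻¹) = π₂(f(a)a⁻¹)`. -/
theorem stmt_5 {A : Type*} [CommGroup A] [Fintype A]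
    (f : A ≃* A) (hf2 : ∀ b : A, f (f b) = b)
    (π₁ π₂ : A →* ℂˣ) (a : A)
    (h : (π₁ a : ℂ) + (π₁ (f a) : ℂ) = (π₂ a : ℂ) + (π₂ (f a) : ℂ)) :
    (π₁ (f a * a⁻¹) : ℂ) = (starRingEnd ℂ) (π₂ (f a * a⁻¹) : ℂ) ∨
      (π₁ (f a * a⁻¹) : ℂ) = (π₂ (f a * a⁻¹) : ℂ) :=
  stmt_5_general f π₁ π₂ a h
end

section
/- Let G = ⟨A, x | x² = y, xax⁻¹ = f(a)⟩ with A finite abelian of order ≥ 3, f ∈ Aut(A) of order 2, f(y) = y, and B = {f(a)a⁻¹ : a ∈ A}. Then G has exactly 2·[A:B] inequivalent one-dimensional representations. -/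
/-!
Every one-dimensional character factors through the abelianization, so their number is
`[G : G']`. Since `A` is abelian of index two and `x ∉ A`, every element of `G` lies in `A` or in
`xA`, and a case check shows that every commutator is `⁅x, a⁆` or its inverse for some `a ∈ A`;
hence `G'` is the image of `B`, since `⁅x, a⁆ = f(a)a⁻¹`, and `[G : G'] = [G : A][A : B]`.
-/

open Subgroup
open scoped commutatorElement

theorem card_monoidHom_units_complex_eq_index_commutator (G : Type*) [Group G] [Finite G] :
    Nat.card (G →* ℂˣ) = (commutator G).index :=
  calc Nat.card (G →* ℂˣ) = Nat.card (Abelianization G →* ℂˣ) :=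
        Nat.card_congr Abelianization.lift
    _ = Nat.card (Abelianization G) := CommGroup.card_monoidHom_of_hasEnoughRootsOfUnity _ _
    _ = (commutator G).index := rfl

section IndexTwo

variable {G : Type*} [Group G] {A : Subgroup G} {x : G}

theorem mem_or_exists_eq_mul_of_index_eq_two (hidx : A.index = 2) (hx : x ∉ A) (g : G) :
    g ∈ A ∨ ∃ c ∈ A, g = x * c := by
  refine or_iff_not_imp_left.mpr fun hg => ⟨x⁻¹ * g, ?_, (mul_inv_cancel_left x g).symm⟩
  simp [mul_mem_iff_of_index_two hidx, hg, hx]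

variable [IsMulCommutative A]

theorem commutatorElement_mul_left_of_mem {c h : G} (hc : c ∈ A) (hh : h ∈ A) :
    ⁅x * c, h⁆ = ⁅x, h⁆ := by
  have hch : c * h * c⁻¹ = h := by rw [setLike_mul_comm hc hh, mul_inv_cancel_right]
  calc ⁅x * c, h⁆ = x * (c * h * c⁻¹) * x⁻¹ * h⁻¹ := by simp only [commutatorElement_def]; group
    _ = ⁅x, h⁆ := by rw [hch, commutatorElement_def]

theorem commutatorElement_mul_mul_of_mem (hA : A.Normal) {a b : G} (ha : a ∈ A) (hb : b ∈ A) :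
    ⁅x * a, x * b⁆ = ⁅x, x * (a⁻¹ * b) * x⁻¹⁆ := by
  set d := a⁻¹ * b
  have hd : d ∈ A := mul_mem (inv_mem ha) hb
  have hxd : ⁅x, d⁆ ∈ A := mul_mem (hA.conj_mem d hd x) (inv_mem hd)
  have had : a * ⁅x, d⁆ * a⁻¹ = ⁅x, d⁆ := by rw [setLike_mul_comm ha hxd, mul_inv_cancel_right]
  calc ⁅x * a, x * b⁆ = x * a * ⁅x * a, d⁆ * (x * a)⁻¹ := by
        simp only [d, commutatorElement_def]; group
    _ = x * (a * ⁅x, d⁆ * a⁻¹) * x⁻¹ := by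
        rw [commutatorElement_mul_left_of_mem ha hd]; group
    _ = ⁅x, x * d * x⁻¹⁆ := by rw [had]; simp only [commutatorElement_def]; group

theorem commutator_eq_closure_range_commutatorElement (hidx : A.index = 2) (hx : x ∉ A) :
    commutator G = closure (Set.range fun a : A => ⁅x, (a : G)⁆) := by
  set N := closure (Set.range fun a : A => ⁅x, (a : G)⁆)
  have hgen : ∀ a ∈ A, ⁅x, a⁆ ∈ N := fun a ha => subset_closure ⟨⟨a, ha⟩, rfl⟩
  refine le_antisymm ?_ ?_
  · rw [commutator_eq_closure, closure_le]
    rintro _ ⟨g, h, rfl⟩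
    rcases mem_or_exists_eq_mul_of_index_eq_two hidx hx g with hg | ⟨a, ha, rfl⟩ <;>
      rcases mem_or_exists_eq_mul_of_index_eq_two hidx hx h with hh | ⟨b, hb, rfl⟩
    · rw [commutatorElement_eq_one_iff_mul_comm.mpr (setLike_mul_comm hg hh)]
      exact N.one_mem
    · rw [← commutatorElement_inv, commutatorElement_mul_left_of_mem hb hg]
      exact inv_mem (hgen g hg)
    · rw [commutatorElement_mul_left_of_mem ha hh]
      exact hgen h hh
    · rw [commutatorElement_mul_mul_of_mem (normal_of_index_eq_two hidx) ha hb]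
      exact hgen _ ((normal_of_index_eq_two hidx).conj_mem _ (mul_mem (inv_mem ha) hb) x)
  · rw [closure_le, _root_.commutator_def]
    rintro _ ⟨a, rfl⟩
    exact commutator_mem_commutator (mem_top x) (mem_top (a : G))

end IndexTwo

theorem stmt_6_general {G : Type*} [Group G] [Fintype G] (A : Subgroup G)
    (hA : ∀ a b : ↥A, a * b = b * a) (hidx : A.index = 2)
    (f : ↥A ≃* ↥A)
    (x : G) (hx : x ∉ A)
    (hconj : ∀ a : ↥A, x * (a : G) * x⁻¹ = ((f a : ↥A) : G)) :
    Nat.card (G →* ℂˣ) =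
      2 * (Subgroup.closure {b : ↥A | ∃ a : ↥A, b = f a * a⁻¹}).index := by
  have : IsMulCommutative A := isMulCommutative_iff.mpr hA
  have hB : (closure {b : A | ∃ a : A, b = f a * a⁻¹}).map A.subtype = commutator G := by
    have hS : {b : A | ∃ a : A, b = f a * a⁻¹} = Set.range fun a => f a * a⁻¹ := by
      ext; simp only [Set.mem_ofPred_eq, Set.mem_range, eq_comm]
    rw [commutator_eq_closure_range_commutatorElement hidx hx, MonoidHom.map_closure, hS,
      ← Set.range_comp]
    congr 2
    funext a
    simp [commutatorElement_def, hconj]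
  rw [card_monoidHom_units_complex_eq_index_commutator, ← hB, index_map_subtype, hidx,
    mul_comm]

/-- `G = ⟨A, x | x² = y, xax⁻¹ = f(a)⟩` has exactly `2·[A:B]` distinct
one-dimensional representations, where `B = {f(a)a⁻¹ : a ∈ A}`. -/
theorem stmt_6 {G : Type*} [Group G] [Fintype G] (A : Subgroup G)
    (hA : ∀ a b : ↥A, a * b = b * a) (hcard : 3 ≤ Nat.card A) (hidx : A.index = 2)
    (f : ↥A ≃* ↥A) (hf2 : ∀ a : ↥A, f (f a) = a) (hfne : f ≠ MulEquiv.refl ↥A)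
    (x : G) (hx : x ∉ A) (y : ↥A) (hy : f y = y) (hx2 : x ^ 2 = (y : G))
    (hconj : ∀ a : ↥A, x * (a : G) * x⁻¹ = ((f a : ↥A) : G)) :
    Nat.card (G →* ℂˣ) =
      2 * (Subgroup.closure {b : ↥A | ∃ a : ↥A, b = f a * a⁻¹}).index :=
  stmt_6_general A hA hidx f x hx hconj
end
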